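/- Given single-piece existential rules R1: B1 → H1 and R2: B2 → H2 with disjoint variables, and a piece-unifier μ = (B2', H1', u) of B2 with R1 such that u maps no frontier variable of R2 to an existential variable of R1, the existential composition R2 ∘_μ R1 = u(B1) ∪ u(B2 \ B2') → u(H2) is logically entailed by {R1, R2}. -/

import Mathlib

open scoped Classical
noncomputable section

namespace ER

/-- Terms: constants or variables (variables occurring in instances are called nulls). -/
inductive Term where
  | const : ℕ → Term
  | var : ℕ → Term
deriving DecidableEq

def Term.isConst : Term → Prop
  | .const _ => True
  | .var _ => False

/-- An atom `p(t₁,…,tₙ)`. -/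
structure Atom where
  pred : ℕ
  args : List Term
deriving DecidableEq

def Atom.terms (a : Atom) : Set Term := {t | t ∈ a.args}
def Atom.vars (a : Atom) : Set ℕ := {v | Term.var v ∈ a.args}

def termsOf (S : Set Atom) : Set Term := ⋃ a ∈ S, a.terms
def varsOf (S : Set Atom) : Set ℕ := ⋃ a ∈ S, a.vars
/-- The nulls (non-constant terms) occurring in a set of atoms. -/
def nullsOf (S : Set Atom) : Set Term := {t | t ∈ termsOf S ∧ ¬ t.isConst}

def Term.subst (σ : ℕ → Term) : Term → Term
  | .const c => .const c
  | .var v => σ v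

def Atom.subst (σ : ℕ → Term) (a : Atom) : Atom := ⟨a.pred, a.args.map (Term.subst σ)⟩
def substSet (σ : ℕ → Term) (S : Set Atom) : Set Atom := (Atom.subst σ) '' S

/-- A homomorphism from `S1` to `S2`: a substitution of variables by terms mapping `S1` into `S2`. -/
def isHom (σ : ℕ → Term) (S1 S2 : Set Atom) : Prop := substSet σ S1 ⊆ S2

/-- An injective homomorphism (injective on the terms of the source). -/
def isInjHom (σ : ℕ → Term) (S1 S2 : Set Atom) : Prop :=
  isHom σ S1 S2 ∧ Set.InjOn (Term.subst σ) (termsOf S1)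

/-- An instance is a finite set of ground atoms. -/
def IsInstance (I : Set Atom) : Prop := I.Finite ∧ ∀ t ∈ termsOf I, t.isConst

/-- An existential rule, given by its body and head. -/
structure Rule where
  body : Set Atom
  head : Set Atom

def Rule.frontier (R : Rule) : Set ℕ := varsOf R.body ∩ varsOf R.head
def Rule.exist (R : Rule) : Set ℕ := varsOf R.head \ varsOf R.body

/-- Well-formed rule: finite non-empty body and head, no constants. -/
def WfRule (R : Rule) : Prop :=
  R.body.Finite ∧ R.head.Finite ∧ R.body.Nonempty ∧ R.head.Nonempty ∧
  ∀ t ∈ termsOf (R.body ∪ R.head), ¬ t.isConst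

def WfList (L : List Rule) : Prop := ∀ R ∈ L, WfRule R

/-- Restriction of a substitution to a set of variables (default value elsewhere). -/
def restrict (f : ℕ → Term) (F : Set ℕ) : ℕ → Term :=
  fun v => if v ∈ F then f v else Term.const 0

/-- A semi-oblivious naming of nulls for the rules of `L`: the null created for an
existential variable depends only on the rule and the restriction of the trigger to the
frontier, and distinct such data yield distinct nulls. -/
def SONaming (L : List Rule) (ν : Rule → (ℕ → Term) → ℕ → ℕ) : Prop :=
  (∀ R ∈ L, ∀ f g : ℕ → Term,
      restrict f R.frontier = restrict g R.frontier → ν R f = ν R g) ∧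
  (∀ R ∈ L, ∀ R' ∈ L, ∀ f f' x x', ν R f x = ν R' f' x' →
      R = R' ∧ restrict f R.frontier = restrict f' R'.frontier ∧ x = x')

/-- The safe extension of a trigger `π`, replacing each existential variable by its null. -/
def safeSub (ν : Rule → (ℕ → Term) → ℕ → ℕ) (R : Rule) (π : ℕ → Term) : ℕ → Term :=
  fun y => if y ∈ R.exist then Term.var (ν R (restrict π R.frontier) y) else π y

/-- One breadth-first semi-oblivious chase step. -/
def chaseStep (ν : Rule → (ℕ → Term) → ℕ → ℕ) (L : List Rule) (S : Set Atom) : Set Atom :=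
  S ∪ {a | ∃ R ∈ L, ∃ π : ℕ → Term, isHom π R.body S ∧ a ∈ substSet (safeSub ν R π) R.head}

/-- The breadth-first semi-oblivious chase. -/
def chaseF (ν : Rule → (ℕ → Term) → ℕ → ℕ) (L : List Rule) (I : Set Atom) : ℕ → Set Atom
  | 0 => I
  | k + 1 => chaseStep ν L (chaseF ν L I k)

def chaseInf (ν : Rule → (ℕ → Term) → ℕ → ℕ) (L : List Rule) (I : Set Atom) : Set Atom :=
  ⋃ k, chaseF ν L I k

/-- `L'` parallelises `L`. -/
def Parallelises (L' L : List Rule) : Prop :=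
  ∀ ν ν', SONaming L ν → SONaming L' ν' → ∀ I, IsInstance I →
    (∃ σ, isInjHom σ (chaseInf ν L I) (chaseF ν' L' I 1)) ∧
    (∃ σ, isHom σ (chaseF ν' L' I 1) (chaseInf ν L I))

def Parallelisable (L : List Rule) : Prop := ∃ L', WfList L' ∧ Parallelises L' L

/-- Boundedness of the semi-oblivious chase, uniformly over all instances. -/
def Bounded (L : List Rule) : Prop :=
  ∃ k, ∀ ν, SONaming L ν → ∀ I, IsInstance I → chaseF ν L I k = chaseInf ν L I

def ChaseFinite (L : List Rule) : Prop :=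
  ∀ ν, SONaming L ν → ∀ I, IsInstance I → ∃ k, chaseF ν L I k = chaseInf ν L I

/-- Two atoms are `T`-linked if they share a term of `T`. -/
def linked (T : Set Term) (a b : Atom) : Prop := ∃ t ∈ T, t ∈ a.terms ∧ t ∈ b.terms

/-- Connectivity in `S` by a path of atoms where consecutive atoms share a term of `T`. -/
def connectedIn (S : Set Atom) (T : Set Term) (a b : Atom) : Prop :=
  a ∈ S ∧ b ∈ S ∧ Relation.ReflTransGen (fun x y => x ∈ S ∧ y ∈ S ∧ linked T x y) a b

/-- `P` is closed in `S` w.r.t. `T`-linkedness. -/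
def closedIn (S : Set Atom) (T : Set Term) (P : Set Atom) : Prop :=
  ∀ a ∈ S, ∀ b ∈ P, linked T a b → a ∈ P

/-- A piece of `S` w.r.t. `T`: a non-empty subset closed under `T`-linkedness and minimal such. -/
def IsPiece (S : Set Atom) (T : Set Term) (P : Set Atom) : Prop :=
  P.Nonempty ∧ P ⊆ S ∧ closedIn S T P ∧
  ∀ P', P' ⊆ P → P'.Nonempty → closedIn S T P' → P' = P

/-- A single-piece rule: its head is a piece of itself w.r.t. its existential variables. -/
def SinglePiece (R : Rule) : Prop := IsPiece R.head (Term.var '' R.exist) R.head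

/-- The rule used at step `k` of a derivation. -/
def ruleAt (L : List Rule) (r : ℕ → ℕ) (k : ℕ) : Rule := L.getD (r k) ⟨∅, ∅⟩

/-- The set of atoms produced by the `k`-th rule application of a derivation. -/
def producedAt (ν : Rule → (ℕ → Term) → ℕ → ℕ) (L : List Rule) (r : ℕ → ℕ)
    (π : ℕ → ℕ → Term) (k : ℕ) : Set Atom :=
  substSet (safeSub ν (ruleAt L r k) (π k)) (ruleAt L r k).head

def derivState (ν : Rule → (ℕ → Term) → ℕ → ℕ) (L : List Rule) (I : Set Atom)
    (r : ℕ → ℕ) (π : ℕ → ℕ → Term) : ℕ → Set Atom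
  | 0 => I
  | k + 1 => derivState ν L I r π k ∪ producedAt ν L r π k

/-- An `R`-derivation of length `n` from `I`: each step applies a trigger. -/
def IsDeriv (ν : Rule → (ℕ → Term) → ℕ → ℕ) (L : List Rule) (I : Set Atom) (n : ℕ)
    (r : ℕ → ℕ) (π : ℕ → ℕ → Term) : Prop :=
  ∀ k < n, r k < L.length ∧ isHom (π k) (ruleAt L r k).body (derivState ν L I r π k)

/-- A pieceful derivation: each trigger maps its rule's frontier entirely into the terms of
the initial instance, or entirely into the terms produced by a single earlier application. -/
def PiecefulDeriv (ν : Rule → (ℕ → Term) → ℕ → ℕ) (L : List Rule) (I : Set Atom) (n : ℕ)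
    (r : ℕ → ℕ) (π : ℕ → ℕ → Term) : Prop :=
  ∀ k < n, (∀ x ∈ (ruleAt L r k).frontier, π k x ∈ termsOf I) ∨
    ∃ j < k, ∀ x ∈ (ruleAt L r k).frontier, π k x ∈ termsOf (producedAt ν L r π j)

/-- A pieceful rule set: every derivation from every instance is pieceful. -/
def PiecefulSet (L : List Rule) : Prop :=
  ∀ ν, SONaming L ν → ∀ I, IsInstance I → ∀ n r π,
    IsDeriv ν L I n r π → PiecefulDeriv ν L I n r π

/-- First-order structures for the semantics of rules. -/
structure Struct where
  D : Type
  nonempty : Nonempty D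
  interp : ℕ → List D → Prop
  cinterp : ℕ → D

def evalT (M : Struct) (v : ℕ → M.D) : Term → M.D
  | .const c => M.cinterp c
  | .var x => v x

def holdsA (M : Struct) (v : ℕ → M.D) (a : Atom) : Prop :=
  M.interp a.pred (a.args.map (evalT M v))

/-- Satisfaction of (the universal-existential closure of) a rule in a structure. -/
def satRule (M : Struct) (R : Rule) : Prop :=
  ∀ v : ℕ → M.D, (∀ a ∈ R.body, holdsA M v a) →
    ∃ w : ℕ → M.D, (∀ x ∈ varsOf R.body, w x = v x) ∧ ∀ a ∈ R.head, holdsA M w a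

/-- Separating variables of `S' ⊆ S`: variables occurring both in `S'` and in `S \ S'`. -/
def sepVars (S' S : Set Atom) : Set ℕ := varsOf S' ∩ varsOf (S \ S')

/-- A piece-unifier `(S', H', u)` of a set of atoms `S` with a rule `R`. -/
def IsPieceUnifier (S : Set Atom) (R : Rule) (S' H' : Set Atom) (u : ℕ → Term) : Prop :=
  Disjoint (varsOf S) (varsOf (R.body ∪ R.head)) ∧
  S'.Nonempty ∧ S' ⊆ S ∧ H' ⊆ R.head ∧
  (∀ x, x ∉ R.frontier ∪ varsOf S' → u x = Term.var x) ∧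
  (∀ x ∈ R.frontier ∪ varsOf S', ∃ y ∈ varsOf R.head, u x = Term.var y) ∧
  (∀ x ∈ R.frontier, ∃ y ∈ R.frontier, u x = Term.var y) ∧
  (∀ x ∈ sepVars S' S, ∃ y ∈ R.frontier, u x = Term.var y) ∧
  substSet u S' = substSet u H'

/-- The existential stability property of a piece-unifier of `body R2` with `R1`. -/
def StableUnifier (R2 R1 : Rule) (B2' : Set Atom) (u : ℕ → Term) : Prop :=
  (∀ x ∈ R2.frontier, u x ∉ Term.var '' R1.exist) ∨ R2.frontier ⊆ varsOf B2'

/-- The existential composition `R2 ∘_μ R1` w.r.t. a piece-unifier `μ = (B2', H1', u)`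
of `body R2` with `R1`. -/
def compose (R2 R1 : Rule) (B2' : Set Atom) (u : ℕ → Term) : Rule :=
  if ∀ x ∈ R2.frontier, u x ∉ Term.var '' R1.exist then
    ⟨substSet u R1.body ∪ substSet u (R2.body \ B2'), substSet u R2.head⟩
  else
    ⟨substSet u R1.body ∪ substSet u (R2.body \ B2'),
     substSet u R1.head ∪ substSet u R2.head⟩

/-- The closure `R*` of a rule set under existential composition. -/
inductive InClosure (𝒮 : Set Rule) : Rule → Prop
  | base {R : Rule} : R ∈ 𝒮 → InClosure 𝒮 R
  | comp {Ri Rj : Rule} {B' H' : Set Atom} {u : ℕ → Term} :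
      InClosure 𝒮 Ri → InClosure 𝒮 Rj →
      IsPieceUnifier Ri.body Rj B' H' u → InClosure 𝒮 (compose Ri Rj B' u)

def ruleSet (L : List Rule) : Set Rule := {R | R ∈ L}

/-- The stability property for a (possibly infinite) rule set. -/
def StableSet (𝒮 : Set Rule) : Prop :=
  ∀ R1 ∈ 𝒮, ∀ R2 ∈ 𝒮, ∀ B2' H1' u,
    IsPieceUnifier R2.body R1 B2' H1' u → StableUnifier R2 R1 B2' u

/-- `J` is a result of one breadth-first chase step of a (possibly infinite) rule set on `I`,
with fresh pairwise-compatible nulls (semi-oblivious naming). -/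
def OneStepResult (𝒮 : Set Rule) (I J : Set Atom) : Prop :=
  ∃ ν : Rule → (ℕ → Term) → ℕ → ℕ,
    (∀ R ∈ 𝒮, ∀ f x, Term.var (ν R f x) ∉ termsOf I) ∧
    (∀ R ∈ 𝒮, ∀ R' ∈ 𝒮, ∀ f f' x x', ν R f x = ν R' f' x' →
        R = R' ∧ restrict f R.frontier = restrict f' R'.frontier ∧ x = x') ∧
    J = I ∪ {a | ∃ R ∈ 𝒮, ∃ π : ℕ → Term, isHom π R.body I ∧
                  a ∈ substSet (safeSub ν R π) R.head}

/-- `I, R ⊨ q` for a Boolean conjunctive query `q` (a set of atoms). -/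
def Entails (L : List Rule) (I q : Set Atom) : Prop :=
  ∀ ν, SONaming L ν → ∃ k σ, isHom σ q (chaseF ν L I k)

/-- The null `t` occurs in at least `n` atoms of `S`. -/
def occursInAtLeast (S : Set Atom) (t : Term) (n : ℕ) : Prop :=
  ∃ F : Set Atom, F ⊆ {a | a ∈ S ∧ t ∈ a.terms} ∧ F.Finite ∧ n ≤ F.ncard

def FrontierGuarded (R : Rule) : Prop := ∃ a ∈ R.body, R.frontier ⊆ a.vars

def IsDatalog (R : Rule) : Prop := R.exist = ∅ ∧ ∃ a, R.head = {a}

end ER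

/-!
Let `v` satisfy `u(B1) ∪ u(B2 \ B2')`. Firing `R1` on `u(B1)` and storing the witnesses on the
existential variables of `R1`, which `u` fixes, gives a valuation satisfying `u(H1)`, hence
`u(B2') = u(H1')`; it still satisfies `u(B2 \ B2')`, whose variables are frontier variables of
`R1` or variables of `B2`. So `R2` fires on `u(B2)`, and storing its witnesses on the
existential variables of `R2` yields `u(H2)`. Neither update touches the variables of the
composed body, which lie in `B1 ∪ B2`.
-/

namespace ER

lemma mem_varsOf {S : Set Atom} {x : ℕ} : x ∈ varsOf S ↔ ∃ a ∈ S, Term.var x ∈ a.args := by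
  simp [varsOf, Atom.vars]

lemma varsOf_mono {S T : Set Atom} (h : S ⊆ T) : varsOf S ⊆ varsOf T :=
  Set.biUnion_subset_biUnion_left h

lemma varsOf_union (S T : Set Atom) : varsOf (S ∪ T) = varsOf S ∪ varsOf T :=
  Set.biUnion_union S T _

lemma mem_varsOf_substSet {S : Set Atom} {u : ℕ → Term} {x : ℕ} :
    x ∈ varsOf (substSet u S) ↔ ∃ z ∈ varsOf S, u z = Term.var x := by
  simp only [mem_varsOf, substSet, Set.exists_mem_image, Atom.subst, List.mem_map]
  constructor
  · rintro ⟨a, ha, t, ht, htx⟩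
    cases t with
    | const c => cases htx
    | var z => exact ⟨z, ⟨a, ha, ht⟩, htx⟩
  · rintro ⟨z, ⟨a, ha, hz⟩, hzx⟩
    exact ⟨a, ha, Term.var z, hz, hzx⟩

lemma varsOf_substSet_subset {S : Set Atom} {u : ℕ → Term} {V : Set ℕ}
    (h : ∀ x ∈ varsOf S, ∀ y, u x = Term.var y → y ∈ V) : varsOf (substSet u S) ⊆ V := by
  intro y hy
  obtain ⟨x, hx, hxy⟩ := mem_varsOf_substSet.1 hy
  exact h x hx y hxy

lemma Rule.frontier_subset_body (R : Rule) : R.frontier ⊆ varsOf R.body :=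
  Set.inter_subset_left

lemma Rule.exist_subset (R : Rule) : R.exist ⊆ varsOf (R.body ∪ R.head) :=
  fun _ hx => (varsOf_union _ _).symm ▸ Or.inr hx.1

lemma Rule.disjoint_exist_body (R : Rule) : Disjoint R.exist (varsOf R.body) :=
  Set.disjoint_sdiff_left

section Semantics

variable {M : Struct}

lemma evalT_subst (v : ℕ → M.D) (u : ℕ → Term) (t : Term) :
    evalT M v (t.subst u) = evalT M (fun x => evalT M v (u x)) t := by
  cases t <;> rfl

lemma holdsA_subst (v : ℕ → M.D) (u : ℕ → Term) (a : Atom) :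
    holdsA M v (a.subst u) ↔ holdsA M (fun x => evalT M v (u x)) a := by
  simp only [holdsA, Atom.subst, List.map_map, Function.comp_def, evalT_subst]

lemma forall_holdsA_substSet_iff (v : ℕ → M.D) (u : ℕ → Term) (S : Set Atom) :
    (∀ a ∈ substSet u S, holdsA M v a) ↔ ∀ a ∈ S, holdsA M (fun x => evalT M v (u x)) a := by
  simp only [substSet, Set.forall_mem_image, holdsA_subst]

lemma holdsA_congr {v w : ℕ → M.D} {a : Atom} (h : Set.EqOn v w a.vars) :
    holdsA M v a ↔ holdsA M w a := by
  unfold holdsA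
  rw [List.map_congr_left fun t ht => ?_]
  cases t with
  | const c => rfl
  | var x => exact h ht

lemma forall_holdsA_congr {v w : ℕ → M.D} {S : Set Atom} (h : Set.EqOn v w (varsOf S)) :
    (∀ a ∈ S, holdsA M v a) ↔ ∀ a ∈ S, holdsA M w a :=
  forall₂_congr fun a ha => holdsA_congr fun _ hx => h (mem_varsOf.2 ⟨a, ha, hx⟩)

/-- The hypotheses on `u` let the witnesses for the existential variables of `R` be stored on
those variables themselves. -/
theorem satRule.exists_eqOn_forall_holdsA_substSet_head {R : Rule} (hR : satRule M R)
    {u : ℕ → Term} (hex : ∀ x ∈ R.exist, u x = Term.var x)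
    (hbody : Disjoint (varsOf (substSet u R.body)) R.exist) {v : ℕ → M.D}
    (hv : ∀ a ∈ substSet u R.body, holdsA M v a) :
    ∃ w : ℕ → M.D, Set.EqOn w v R.existᶜ ∧ ∀ a ∈ substSet u R.head, holdsA M w a := by
  obtain ⟨w₀, hw₀v, hw₀⟩ := hR _ ((forall_holdsA_substSet_iff v u R.body).1 hv)
  refine ⟨R.exist.piecewise w₀ v, Set.piecewise_eqOn_compl _ _ _, ?_⟩
  refine (forall_holdsA_substSet_iff _ u R.head).2 ((forall_holdsA_congr fun x hx => ?_).1 hw₀)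
  by_cases hxe : x ∈ R.exist
  · rw [hex x hxe]
    exact (Set.piecewise_eq_of_mem _ _ _ hxe).symm
  · have hxb : x ∈ varsOf R.body := by_contra fun h => hxe ⟨hx, h⟩
    rw [hw₀v x hxb]
    cases hux : u x with
    | const c => rfl
    | var y =>
      have hy : y ∈ varsOf (substSet u R.body) := mem_varsOf_substSet.2 ⟨x, hxb, hux⟩
      exact (Set.piecewise_eq_of_notMem _ _ _ (hbody.notMem_of_mem_left hy)).symm

end Semantics

namespace IsPieceUnifier

variable {S S' H' : Set Atom} {R : Rule} {u : ℕ → Term}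

lemma subst_eq_self (hu : IsPieceUnifier S R S' H' u) {x : ℕ} (hfr : x ∉ R.frontier)
    (hS' : x ∉ varsOf S') : u x = Term.var x := by
  have ⟨_, _, _, _, hfix, _, _, _, _⟩ := hu
  exact hfix x fun h => h.elim hfr hS'

lemma notMem_frontier_of_mem_varsOf (hu : IsPieceUnifier S R S' H' u) {x : ℕ}
    (hx : x ∈ varsOf S) : x ∉ R.frontier := fun h =>
  hu.1.notMem_of_mem_left hx (varsOf_mono Set.subset_union_left (R.frontier_subset_body h))

lemma subset (hu : IsPieceUnifier S R S' H' u) : S' ⊆ S :=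
  hu.2.2.1

lemma varsOf_subset (hu : IsPieceUnifier S R S' H' u) : varsOf S' ⊆ varsOf S :=
  varsOf_mono hu.subset

lemma subst_exist (hu : IsPieceUnifier S R S' H' u) {x : ℕ} (hx : x ∈ R.exist) :
    u x = Term.var x :=
  hu.subst_eq_self (fun h => hx.2 (R.frontier_subset_body h))
    fun h => hu.1.notMem_of_mem_right (R.exist_subset hx) (hu.varsOf_subset h)

lemma varsOf_substSet_body_subset (hu : IsPieceUnifier S R S' H' u) :
    varsOf (substSet u R.body) ⊆ varsOf R.body := by
  have ⟨hdisj, _, _, _, _, _, hfr, _, _⟩ := hu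
  refine ER.varsOf_substSet_subset fun x hx y hxy => ?_
  by_cases hxfr : x ∈ R.frontier
  · obtain ⟨z, hz, huz⟩ := hfr x hxfr
    exact Term.var.inj (huz.symm.trans hxy) ▸ R.frontier_subset_body hz
  · have hS' : x ∉ varsOf S' := fun h =>
      hdisj.notMem_of_mem_left (hu.varsOf_subset h) (varsOf_mono Set.subset_union_left hx)
    exact Term.var.inj ((hu.subst_eq_self hxfr hS').symm.trans hxy) ▸ hx

lemma varsOf_substSet_diff_subset (hu : IsPieceUnifier S R S' H' u) :
    varsOf (substSet u (S \ S')) ⊆ R.frontier ∪ varsOf (S \ S') := by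
  have ⟨_, _, _, _, _, _, _, hsep, _⟩ := hu
  refine ER.varsOf_substSet_subset fun x hx y hxy => ?_
  by_cases hS' : x ∈ varsOf S'
  · obtain ⟨z, hz, huz⟩ := hsep x ⟨hS', hx⟩
    exact Or.inl (Term.var.inj (huz.symm.trans hxy) ▸ hz)
  · have hfr := hu.notMem_frontier_of_mem_varsOf (varsOf_mono Set.sdiff_subset hx)
    exact Or.inr (Term.var.inj ((hu.subst_eq_self hfr hS').symm.trans hxy) ▸ hx)

lemma varsOf_substSet_subset (hu : IsPieceUnifier S R S' H' u) :
    varsOf (substSet u S) ⊆ varsOf R.head ∪ varsOf S := by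
  have ⟨_, _, _, _, _, hmap, _, _, _⟩ := hu
  refine ER.varsOf_substSet_subset fun x hx y hxy => ?_
  by_cases hS' : x ∈ varsOf S'
  · obtain ⟨z, hz, huz⟩ := hmap x (Or.inr hS')
    exact Or.inl (Term.var.inj (huz.symm.trans hxy) ▸ hz)
  · have hfr := hu.notMem_frontier_of_mem_varsOf hx
    exact Or.inr (Term.var.inj ((hu.subst_eq_self hfr hS').symm.trans hxy) ▸ hx)

lemma substSet_subset_head (hu : IsPieceUnifier S R S' H' u) :
    substSet u S' ⊆ substSet u R.head := by
  have ⟨_, _, _, hH', _, _, _, _, hunif⟩ := hu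
  exact hunif ▸ Set.image_mono hH'

lemma varsOf_composedBody_subset (hu : IsPieceUnifier S R S' H' u) :
    varsOf (substSet u R.body ∪ substSet u (S \ S')) ⊆ varsOf R.body ∪ varsOf S := by
  rw [varsOf_union]
  exact Set.union_subset (hu.varsOf_substSet_body_subset.trans Set.subset_union_left)
    (hu.varsOf_substSet_diff_subset.trans
      (Set.union_subset_union R.frontier_subset_body (varsOf_mono Set.sdiff_subset)))

lemma forall_holdsA_substSet {M : Struct} {w : ℕ → M.D} (hu : IsPieceUnifier S R S' H' u)
    (hhead : ∀ a ∈ substSet u R.head, holdsA M w a)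
    (hrest : ∀ a ∈ substSet u (S \ S'), holdsA M w a) :
    ∀ a ∈ substSet u S, holdsA M w a := by
  rw [← Set.union_sdiff_cancel hu.subset]
  rintro _ ⟨b, hb | hb, rfl⟩
  · exact hhead _ (hu.substSet_subset_head ⟨b, hb, rfl⟩)
  · exact hrest _ ⟨b, hb, rfl⟩

end IsPieceUnifier

theorem composition_sound_case1_general (R1 R2 : Rule)
    (hdisj : Disjoint (varsOf (R1.body ∪ R1.head)) (varsOf (R2.body ∪ R2.head)))
    (B2' H1' : Set Atom) (u : ℕ → Term)
    (hu : IsPieceUnifier R2.body R1 B2' H1' u) :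
    ∀ M : Struct, satRule M R1 → satRule M R2 →
      satRule M ⟨substSet u R1.body ∪ substSet u (R2.body \ B2'),
                 substSet u R2.head⟩ := by
  intro M sat1 sat2 v hv
  have hexist1 : Disjoint R1.exist (varsOf R1.body ∪ varsOf R2.body) :=
    Set.disjoint_union_right.2 ⟨R1.disjoint_exist_body,
      (hdisj.mono_left R1.exist_subset).mono_right (varsOf_mono Set.subset_union_left)⟩
  have hexist2 : Disjoint R2.exist (varsOf (R1.body ∪ R1.head) ∪ varsOf R2.body) :=
    Set.disjoint_union_right.2 ⟨hdisj.symm.mono_left R2.exist_subset, R2.disjoint_exist_body⟩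
  have hbody := hu.varsOf_composedBody_subset
  obtain ⟨w1, hw1v, hw1⟩ := sat1.exists_eqOn_forall_holdsA_substSet_head
    (fun _ => hu.subst_exist)
    (hexist1.symm.mono_left (hu.varsOf_substSet_body_subset.trans Set.subset_union_left))
    fun a ha => hv a (Or.inl ha)
  have hw1B2 := hu.forall_holdsA_substSet hw1 <| (forall_holdsA_congr <| hw1v.mono fun x hx =>
    hexist1.notMem_of_mem_right (hbody (varsOf_mono Set.subset_union_right hx))).2
      fun a ha => hv a (Or.inr ha)
  obtain ⟨w2, hw2w1, hw2⟩ := sat2.exists_eqOn_forall_holdsA_substSet_head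
    (fun x hx => hu.subst_eq_self
      (fun h => hexist2.notMem_of_mem_left hx
        (Or.inl (varsOf_mono Set.subset_union_left (R1.frontier_subset_body h))))
      (fun h => R2.disjoint_exist_body.notMem_of_mem_left hx (hu.varsOf_subset h)))
    (hexist2.symm.mono_left (hu.varsOf_substSet_subset.trans
      (Set.union_subset_union_left _ (varsOf_mono Set.subset_union_right))))
    hw1B2
  refine ⟨w2, fun x hx => ?_, hw2⟩
  have hx' := hbody hx
  exact (hw2w1 (hexist2.notMem_of_mem_right
    (Set.union_subset_union_left _ (varsOf_mono Set.subset_union_left) hx'))).trans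
    (hw1v (hexist1.notMem_of_mem_right hx'))

/-- if no frontier variable of `R2` is unified with an existential variable
of `R1`, the existential composition `u(B1) ∪ u(B2 \ B2') → u(H2)` is entailed by `{R1,R2}`. -/
theorem composition_sound_case1 (R1 R2 : Rule) (h1 : WfRule R1) (h2 : WfRule R2)
    (hs1 : SinglePiece R1) (hs2 : SinglePiece R2)
    (hdisj : Disjoint (varsOf (R1.body ∪ R1.head)) (varsOf (R2.body ∪ R2.head)))
    (B2' H1' : Set Atom) (u : ℕ → Term)
    (hu : IsPieceUnifier R2.body R1 B2' H1' u)
    (hc : ∀ x ∈ R2.frontier, u x ∉ Term.var '' R1.exist) :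
    ∀ M : Struct, satRule M R1 → satRule M R2 →
      satRule M ⟨substSet u R1.body ∪ substSet u (R2.body \ B2'),
                 substSet u R2.head⟩ :=
  composition_sound_case1_general R1 R2 hdisj B2' H1' u hu

end ER
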